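/- For a nonzero integer p define φ_p(λ) = 2·arctan(2λ/p) for λ ∈ ℝ, and φ_0(λ) = 0. Let a be a nonnegative integer and M a nonnegative integer, and set Φ(λ) = ∑_{r=0}^{M} φ_{a−M+2r}(λ). Then lim_{λ→+∞} Φ(λ) = π·min(M+1, a) and lim_{λ→−∞} Φ(λ) = −π·min(M+1, a). -/
import Mathlib


open Real Filter BigOperators

/-- The phase function `φ_p(λ) = 2 arctan(2λ/p)` for `p ≠ 0`, and `φ_0 = 0`. -/
noncomputable def phiFn (p : ℤ) (lam : ℝ) : ℝ :=
  if p = 0 then 0 else 2 * Real.arctan (2 * lam / (p : ℝ))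

lemma phi_tendsto_atTop (p : ℤ) :
    Tendsto (phiFn p) atTop (nhds (Real.pi * (Int.sign p : ℝ))) := by
  rcases lt_trichotomy p 0 with hp | hp | hp
  · have hpe : phiFn p = fun lam => 2 * Real.arctan (2 * lam / (p : ℝ)) := by
      funext lam; simp [phiFn, hp.ne]
    have hpc : ((p : ℝ)) < 0 := by exact_mod_cast hp
    have h1 : Tendsto (fun lam : ℝ => 2 * lam / (p : ℝ)) atTop atBot := by
      refine (tendsto_div_const_atBot_of_neg hpc).mpr ?_
      exact (tendsto_const_mul_atTop_of_pos two_pos).mpr tendsto_id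
    have h2 : Tendsto (fun lam : ℝ => Real.arctan (2 * lam / (p : ℝ))) atTop
        (nhds (-(Real.pi / 2))) :=
      (Real.tendsto_arctan_atBot.mono_right nhdsWithin_le_nhds).comp h1
    rw [hpe]
    have := h2.const_mul (2 : ℝ)
    convert this using 2
    rw [Int.sign_eq_neg_one_of_neg hp]
    push_cast; ring
  · subst hp
    simp only [phiFn, if_pos rfl, Int.sign_zero, Int.cast_zero, mul_zero]
    exact tendsto_const_nhds
  · have hpe : phiFn p = fun lam => 2 * Real.arctan (2 * lam / (p : ℝ)) := by
      funext lam; simp [phiFn, hp.ne']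
    have hpc : (0 : ℝ) < (p : ℝ) := by exact_mod_cast hp
    have h1 : Tendsto (fun lam : ℝ => 2 * lam / (p : ℝ)) atTop atTop := by
      refine (tendsto_div_const_atTop_of_pos hpc).mpr ?_
      exact (tendsto_const_mul_atTop_of_pos two_pos).mpr tendsto_id
    have h2 : Tendsto (fun lam : ℝ => Real.arctan (2 * lam / (p : ℝ))) atTop
        (nhds (Real.pi / 2)) :=
      (Real.tendsto_arctan_atTop.mono_right nhdsWithin_le_nhds).comp h1
    rw [hpe]
    have := h2.const_mul (2 : ℝ)
    convert this using 2
    rw [Int.sign_eq_one_of_pos hp]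
    push_cast; ring

lemma phi_tendsto_atBot (p : ℤ) :
    Tendsto (phiFn p) atBot (nhds (-(Real.pi * (Int.sign p : ℝ)))) := by
  rcases lt_trichotomy p 0 with hp | hp | hp
  · have hpe : phiFn p = fun lam => 2 * Real.arctan (2 * lam / (p : ℝ)) := by
      funext lam; simp [phiFn, hp.ne]
    have hpc : ((p : ℝ)) < 0 := by exact_mod_cast hp
    have h1 : Tendsto (fun lam : ℝ => 2 * lam / (p : ℝ)) atBot atTop := by
      refine (tendsto_div_const_atTop_of_neg hpc).mpr ?_
      exact (tendsto_const_mul_atBot_of_pos two_pos).mpr tendsto_id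
    have h2 : Tendsto (fun lam : ℝ => Real.arctan (2 * lam / (p : ℝ))) atBot
        (nhds (Real.pi / 2)) :=
      (Real.tendsto_arctan_atTop.mono_right nhdsWithin_le_nhds).comp h1
    rw [hpe]
    have := h2.const_mul (2 : ℝ)
    convert this using 2
    rw [Int.sign_eq_neg_one_of_neg hp]
    push_cast; ring
  · subst hp
    simp only [phiFn, if_pos rfl, Int.sign_zero, Int.cast_zero, mul_zero, neg_zero]
    exact tendsto_const_nhds
  · have hpe : phiFn p = fun lam => 2 * Real.arctan (2 * lam / (p : ℝ)) := by
      funext lam; simp [phiFn, hp.ne']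
    have hpc : (0 : ℝ) < (p : ℝ) := by exact_mod_cast hp
    have h1 : Tendsto (fun lam : ℝ => 2 * lam / (p : ℝ)) atBot atBot := by
      refine (tendsto_div_const_atBot_of_pos hpc).mpr ?_
      exact (tendsto_const_mul_atBot_of_pos two_pos).mpr tendsto_id
    have h2 : Tendsto (fun lam : ℝ => Real.arctan (2 * lam / (p : ℝ))) atBot
        (nhds (-(Real.pi / 2))) :=
      (Real.tendsto_arctan_atBot.mono_right nhdsWithin_le_nhds).comp h1
    rw [hpe]
    have := h2.const_mul (2 : ℝ)
    convert this using 2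
    rw [Int.sign_eq_one_of_pos hp]
    push_cast; ring

lemma mySignSum (a M : ℕ) :
    ∑ r ∈ Finset.range (M + 1), Int.sign ((a : ℤ) - (M : ℤ) + 2 * (r : ℤ))
      = (min (M + 1) a : ℤ) := by
  induction M using Nat.strong_induction_on with
  | _ M ih =>
    match M with
    | 0 =>
      rw [Finset.sum_range_one]
      rcases Nat.eq_zero_or_pos a with ha | ha
      · subst ha; decide
      · have h0 : ((a : ℤ) - ((0 : ℕ) : ℤ) + 2 * ((0 : ℕ) : ℤ)).sign = 1 :=
          Int.sign_eq_one_of_pos (by push_cast; omega)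
        rw [h0]; push_cast; omega
    | 1 =>
      rw [Finset.sum_range_succ, Finset.sum_range_one]
      rcases Nat.lt_or_ge a 1 with ha | ha
      · have ha0 : a = 0 := by omega
        subst ha0; decide
      rcases Nat.lt_or_ge a 2 with ha2 | ha2
      · have ha1 : a = 1 := by omega
        subst ha1; decide
      · have h0 : ((a : ℤ) - ((1 : ℕ) : ℤ) + 2 * ((0 : ℕ) : ℤ)).sign = 1 :=
          Int.sign_eq_one_of_pos (by push_cast; omega)
        have h1 : ((a : ℤ) - ((1 : ℕ) : ℤ) + 2 * ((1 : ℕ) : ℤ)).sign = 1 :=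
          Int.sign_eq_one_of_pos (by push_cast; omega)
        rw [h0, h1]; push_cast; omega
    | (M + 2) =>
      have key : ∑ r ∈ Finset.range (M + 2 + 1),
          Int.sign ((a : ℤ) - ((M + 2 : ℕ) : ℤ) + 2 * (r : ℤ))
          = Int.sign ((a : ℤ) - (M : ℤ) - 2)
            + ((∑ r ∈ Finset.range (M + 1),
                Int.sign ((a : ℤ) - (M : ℤ) + 2 * (r : ℤ)))
              + Int.sign ((a : ℤ) + (M : ℤ) + 2)) := by
        rw [Finset.sum_range_succ' _ (M + 2), Finset.sum_range_succ]
        rw [Finset.sum_congr rfl (fun r _ => by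
          have h : ((a : ℤ) - ((M + 2 : ℕ) : ℤ) + 2 * (((r : ℕ) + 1 : ℕ) : ℤ))
              = (a : ℤ) - (M : ℤ) + 2 * (r : ℤ) := by push_cast; ring
          rw [h])]
        have e2 : ((a : ℤ) - ((M + 2 : ℕ) : ℤ) + 2 * (((M + 1 + 1 : ℕ)) : ℤ))
            = (a : ℤ) + (M : ℤ) + 2 := by push_cast; ring
        have e3 : ((a : ℤ) - ((M + 2 : ℕ) : ℤ) + 2 * ((0 : ℕ) : ℤ))
            = (a : ℤ) - (M : ℤ) - 2 := by push_cast; ring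
        rw [e2, e3]
        ring
      rw [key, ih M (by omega),
        Int.sign_eq_one_of_pos (by omega : (0:ℤ) < (a : ℤ) + (M : ℤ) + 2)]
      rcases lt_trichotomy ((a : ℤ)) ((M : ℤ) + 2) with ha | ha | ha
      · rw [Int.sign_eq_neg_one_of_neg (by omega)]
        push_cast; omega
      · rw [show (a : ℤ) - (M : ℤ) - 2 = 0 by omega, Int.sign_zero]
        push_cast; omega
      · rw [Int.sign_eq_one_of_pos (by omega)]
        push_cast; omega

theorem stmt_4 (a M : ℕ) :
    Tendsto (fun lam : ℝ => ∑ r ∈ Finset.range (M + 1),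
        phiFn ((a : ℤ) - (M : ℤ) + 2 * (r : ℤ)) lam) atTop
      (nhds (Real.pi * (min (M + 1) a : ℕ))) ∧
    Tendsto (fun lam : ℝ => ∑ r ∈ Finset.range (M + 1),
        phiFn ((a : ℤ) - (M : ℤ) + 2 * (r : ℤ)) lam) atBot
      (nhds (-(Real.pi * (min (M + 1) a : ℕ)))) := by
  have hsum : ∑ r ∈ Finset.range (M + 1),
      (Real.pi * (Int.sign ((a : ℤ) - (M : ℤ) + 2 * (r : ℤ)) : ℝ))
      = Real.pi * ((min (M + 1) a : ℕ) : ℝ) := by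
    rw [← Finset.mul_sum]
    congr 1
    have : ∑ r ∈ Finset.range (M + 1),
        ((Int.sign ((a : ℤ) - (M : ℤ) + 2 * (r : ℤ)) : ℤ) : ℝ)
        = (((∑ r ∈ Finset.range (M + 1),
            Int.sign ((a : ℤ) - (M : ℤ) + 2 * (r : ℤ))) : ℤ) : ℝ) := by
      push_cast; ring
    rw [this, mySignSum]
    push_cast; ring
  constructor
  · have h := tendsto_finset_sum (Finset.range (M + 1))
      (fun r _ => phi_tendsto_atTop ((a : ℤ) - (M : ℤ) + 2 * (r : ℤ)))
    rwa [hsum] at h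
  · have h := tendsto_finset_sum (Finset.range (M + 1))
      (fun r _ => phi_tendsto_atBot ((a : ℤ) - (M : ℤ) + 2 * (r : ℤ)))
    have : ∑ r ∈ Finset.range (M + 1),
        (-(Real.pi * (Int.sign ((a : ℤ) - (M : ℤ) + 2 * (r : ℤ)) : ℝ)))
        = -(Real.pi * ((min (M + 1) a : ℕ) : ℝ)) := by
      rw [Finset.sum_neg_distrib, hsum]
    rwa [this] at h
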